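/- Let a : [0,1] → ℝ be C¹ with a(x) > 0, b : ℝ × [0,1] × ℝ³ → ℝ C¹ and 2π-periodic in t, and let (v₁, v₂) be a C¹ solution of the system ∂_t v₁ − a(x)∂_x v₁ = ∂_t v₂ + a(x)∂_x v₂ = −(a'(x)/2)(v₁ − v₂) − b(t,x, J₀v, J₁v, J₂v) with the periodicity and boundary conditions v_j(t+2π,x) = v_j(t,x), v₁(t,0) + v₂(t,0) = 0, v₁(t,1) − v₂(t,1) = 0, where J₀, J₁, J₂ are defined as in the reduction (J₀v = (1/2)∫₀ˣ(v₁−v₂)/a, J₁v = (v₁+v₂)/2, J₂v = (v₁−v₂)/(2a)). Then u := J₀v is C², 2π-periodic in t, and solves ∂_t²u − a(x)²∂_x²u + b(t,x,u,∂_tu,∂_xu) = 0 with u(t,0) = ∂_x u(t,1) = 0. -/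

import Mathlib

/-!
With `g = (v₁ - v₂) / a` we have `u(t, x) = ½ ∫₀ˣ g(t, ξ) dξ`, so `2 a ∂ₓu = v₁ - v₂`.
Subtracting the two equations gives `∂ₜ(v₁ - v₂) = a ∂ₓ(v₁ + v₂)`, i.e. `∂ₜg = ∂ₓ(v₁ + v₂)`;
integrating in `x` and using `v₁ + v₂ = 0` at `x = 0` gives `2 ∂ₜu = v₁ + v₂`. Thus the gradient
of `u` is a C¹ expression in `v₁, v₂, a`, so `u` is C². Adding the two equations, the term
`a ∂ₓ(v₁ - v₂)` in `2 ∂ₜ²u` cancels against `a² ∂ₓ²u`, which leaves the second-order equation.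

Since `a` is only known to be positive on `[0, 1]`, the calculus is done on an open interval
around `[0, 1]` on which `a` stays positive, so that derivatives at `x = 0, 1` are two-sided.
-/

open Real Set MeasureTheory Filter Topology Function Interval

section ParametricPrimitive

variable {E : Type*} [NormedAddCommGroup E]

theorem ContinuousOn.intervalIntegrable_slice {f : ℝ × ℝ → E} {U : Set ℝ}
    (hf : ContinuousOn f (univ ×ˢ U)) (t : ℝ) {a b : ℝ} (hab : uIcc a b ⊆ U) :
    IntervalIntegrable (fun ξ => f (t, ξ)) volume a b :=
  (hf.comp (Continuous.prodMk_right t).continuousOn fun _ hξ => ⟨trivial, hab hξ⟩)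
    |>.intervalIntegrable

variable [NormedSpace ℝ E]

theorem hasDerivAt_intervalIntegral_param {f f₁ : ℝ × ℝ → E} {U : Set ℝ}
    {a b : ℝ} (hab : uIcc a b ⊆ U) (hf : ContinuousOn f (univ ×ˢ U))
    (hf₁ : ContinuousOn f₁ (univ ×ˢ U))
    (hderiv : ∀ t, ∀ ξ ∈ U, HasDerivAt (fun s => f (s, ξ)) (f₁ (t, ξ)) t) (t₀ : ℝ) :
    HasDerivAt (fun t => ∫ ξ in a..b, f (t, ξ)) (∫ ξ in a..b, f₁ (t₀, ξ)) t₀ := by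
  have hK : Metric.closedBall t₀ 1 ×ˢ uIcc a b ⊆ univ ×ˢ U := prod_mono (subset_univ _) hab
  obtain ⟨C, hC⟩ := ((isCompact_closedBall t₀ 1).prod isCompact_uIcc).exists_bound_of_continuousOn
    (hf₁.mono hK)
  have hmeas : ∀ {g : ℝ × ℝ → E}, ContinuousOn g (univ ×ˢ U) → ∀ t,
      AEStronglyMeasurable (fun ξ => g (t, ξ)) (volume.restrict (Ι a b)) := fun hg t =>
    ((hg.comp (Continuous.prodMk_right t).continuousOn fun _ hξ => ⟨trivial, hab hξ⟩).mono
      uIoc_subset_uIcc).aestronglyMeasurable measurableSet_uIoc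
  refine (intervalIntegral.hasDerivAt_integral_of_dominated_loc_of_deriv_le (bound := fun _ => C)
    (F' := fun t ξ => f₁ (t, ξ))
    (Metric.ball_mem_nhds t₀ one_pos) (.of_forall fun t => hmeas hf t)
    (hf.intervalIntegrable_slice t₀ hab) (hmeas hf₁ t₀) ?_ intervalIntegrable_const ?_).2
  · refine .of_forall fun ξ hξ t ht => hC (t, ξ) ⟨Metric.ball_subset_closedBall ht, ?_⟩
    exact uIoc_subset_uIcc hξ
  · exact .of_forall fun ξ hξ t _ => hderiv t ξ (hab (uIoc_subset_uIcc hξ))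

theorem hasFDerivAt_intervalIntegral_upper [CompleteSpace E] {f : ℝ × ℝ → E}
    {s : Set (ℝ × ℝ)} {p₀ : ℝ × ℝ} (hs : s ∈ 𝓝 p₀) (hf : ContinuousOn f s) :
    HasFDerivAt (fun p : ℝ × ℝ => ∫ ξ in p₀.2..p.2, f (p.1, ξ))
      ((ContinuousLinearMap.snd ℝ ℝ ℝ).smulRight (f p₀)) p₀ := by
  rw [hasFDerivAt_iff_isLittleO, Asymptotics.isLittleO_iff]
  intro c hc
  obtain ⟨δ, hδ, hball⟩ := Metric.mem_nhds_iff.1 <|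
    inter_mem hs ((hf.continuousAt hs).eventually (Metric.closedBall_mem_nhds _ hc))
  filter_upwards [Metric.ball_mem_nhds p₀ hδ] with p hp
  have hseg : ∀ ξ ∈ uIcc p₀.2 p.2, (p.1, ξ) ∈ s ∩ f ⁻¹' Metric.closedBall (f p₀) c := by
    refine fun ξ hξ => hball ?_
    rw [Metric.mem_ball, Prod.dist_eq] at hp ⊢
    refine lt_of_le_of_lt (max_le_max le_rfl ?_) hp
    rw [Real.dist_eq, Real.dist_eq]
    exact abs_sub_left_of_mem_uIcc hξ
  have hint : IntervalIntegrable (fun ξ => f (p.1, ξ)) volume p₀.2 p.2 :=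
    ContinuousOn.intervalIntegrable <| hf.comp (Continuous.prodMk_right p.1).continuousOn
      fun ξ hξ => (hseg ξ hξ).1
  have hlin : ((ContinuousLinearMap.snd ℝ ℝ ℝ).smulRight (f p₀)) (p - p₀)
      = ∫ _ in p₀.2..p.2, f p₀ := by simp
  calc ‖(∫ ξ in p₀.2..p.2, f (p.1, ξ)) - (∫ ξ in p₀.2..p₀.2, f (p₀.1, ξ))
        - ((ContinuousLinearMap.snd ℝ ℝ ℝ).smulRight (f p₀)) (p - p₀)‖
      = ‖∫ ξ in p₀.2..p.2, (f (p.1, ξ) - f p₀)‖ := by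
        rw [intervalIntegral.integral_same, sub_zero, hlin,
          intervalIntegral.integral_sub hint intervalIntegrable_const]
    _ ≤ c * |p.2 - p₀.2| := by
        refine intervalIntegral.norm_integral_le_of_norm_le_const fun ξ hξ => ?_
        rw [← dist_eq_norm]
        exact (hseg ξ (uIoc_subset_uIcc hξ)).2
    _ ≤ c * ‖p - p₀‖ := by
        gcongr
        exact norm_snd_le (p - p₀)

theorem hasFDerivAt_intervalIntegral_param_upper [CompleteSpace E] {f f₁ : ℝ × ℝ → E}
    {U : Set ℝ} (hU : IsOpen U) (hUc : U.OrdConnected) {a : ℝ} (ha : a ∈ U)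
    (hf : ContinuousOn f (univ ×ˢ U)) (hf₁ : ContinuousOn f₁ (univ ×ˢ U))
    (hderiv : ∀ t, ∀ ξ ∈ U, HasDerivAt (fun s => f (s, ξ)) (f₁ (t, ξ)) t)
    {p₀ : ℝ × ℝ} (hp₀ : p₀.2 ∈ U) :
    HasFDerivAt (fun p : ℝ × ℝ => ∫ ξ in a..p.2, f (p.1, ξ))
      ((ContinuousLinearMap.fst ℝ ℝ ℝ).smulRight (∫ ξ in a..p₀.2, f₁ (p₀.1, ξ))
        + (ContinuousLinearMap.snd ℝ ℝ ℝ).smulRight (f p₀)) p₀ := by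
  have hO : univ ×ˢ U ∈ 𝓝 p₀ := (isOpen_univ.prod hU).mem_nhds ⟨trivial, hp₀⟩
  have hfixed := (hasDerivAt_intervalIntegral_param (hUc.uIcc_subset ha hp₀) hf hf₁ hderiv
    p₀.1).hasFDerivAt.comp p₀ hasFDerivAt_fst
  have hsplit : (fun p : ℝ × ℝ => ∫ ξ in a..p.2, f (p.1, ξ)) =ᶠ[𝓝 p₀]
      fun p => (∫ ξ in a..p₀.2, f (p.1, ξ)) + ∫ ξ in p₀.2..p.2, f (p.1, ξ) := by
    filter_upwards [hO] with p hp
    exact (intervalIntegral.integral_add_adjacent_intervals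
      (hf.intervalIntegrable_slice p.1 (hUc.uIcc_subset ha hp₀))
      (hf.intervalIntegrable_slice p.1 (hUc.uIcc_subset hp₀ hp.2))).symm
  refine ((hfixed.add (hasFDerivAt_intervalIntegral_upper hO hf)).congr_of_eventuallyEq
    hsplit).congr_fderiv ?_
  ext <;> simp

end ParametricPrimitive

section PartialDerivatives

variable {E : Type*} [NormedAddCommGroup E] [NormedSpace ℝ E]

theorem HasFDerivAt.hasDerivAt_uncurry_left {v : ℝ → ℝ → E} {L : ℝ × ℝ →L[ℝ] E} {t x : ℝ}
    (h : HasFDerivAt (uncurry v) L (t, x)) : HasDerivAt (fun s => v s x) (L (1, 0)) t :=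
  (h.comp_hasDerivAt t ((hasDerivAt_id' t).prodMk (hasDerivAt_const t x)) :)

theorem HasFDerivAt.hasDerivAt_uncurry_right {v : ℝ → ℝ → E} {L : ℝ × ℝ →L[ℝ] E} {t x : ℝ}
    (h : HasFDerivAt (uncurry v) L (t, x)) : HasDerivAt (fun y => v t y) (L (0, 1)) x :=
  (h.comp_hasDerivAt x ((hasDerivAt_const x t).prodMk (hasDerivAt_id' x)) :)

theorem DifferentiableAt.hasDerivAt_uncurry_left {v : ℝ → ℝ → E} {t x : ℝ}
    (h : DifferentiableAt ℝ (uncurry v) (t, x)) :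
    HasDerivAt (fun s => v s x) (deriv (fun s => v s x) t) t :=
  h.hasFDerivAt.hasDerivAt_uncurry_left.differentiableAt.hasDerivAt

theorem DifferentiableAt.hasDerivAt_uncurry_right {v : ℝ → ℝ → E} {t x : ℝ}
    (h : DifferentiableAt ℝ (uncurry v) (t, x)) :
    HasDerivAt (fun y => v t y) (deriv (fun y => v t y) x) x :=
  h.hasFDerivAt.hasDerivAt_uncurry_right.differentiableAt.hasDerivAt

theorem ContDiff.continuous_deriv_uncurry_left {v : ℝ → ℝ → E} (hv : ContDiff ℝ 1 (uncurry v)) :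
    Continuous fun p : ℝ × ℝ => deriv (fun s => v s p.2) p.1 := by
  have h : (fun p : ℝ × ℝ => deriv (fun s => v s p.2) p.1)
      = fun p => fderiv ℝ (uncurry v) p (1, 0) :=
    funext fun p => (hv.differentiable one_ne_zero p).hasFDerivAt.hasDerivAt_uncurry_left.deriv
  rw [h]
  exact (hv.continuous_fderiv one_ne_zero).clm_apply continuous_const

end PartialDerivatives

theorem contDiffOn_succ_of_hasFDerivWithinAt {𝕜 E F : Type*} [NontriviallyNormedField 𝕜]
    [NormedAddCommGroup E] [NormedSpace 𝕜 E] [NormedAddCommGroup F] [NormedSpace 𝕜 F]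
    {n : ℕ} {f : E → F} {f' : E → E →L[𝕜] F} {s : Set E}
    (hf : ∀ x ∈ s, HasFDerivWithinAt f (f' x) s x) (hf' : ContDiffOn 𝕜 n f' s) :
    ContDiffOn 𝕜 (n + 1) f s :=
  (contDiffOn_succ_iff_hasFDerivWithinAt (by simp)).2 fun x hx =>
    ⟨s, by rw [insert_eq_of_mem hx]; exact self_mem_nhdsWithin, by simp, f', hf, hf'⟩

theorem exists_Ioo_subset_of_Icc_subset {S : Set ℝ} (hS : IsOpen S) {p q : ℝ}
    (h : Icc p q ⊆ S) (hpq : p ≤ q) : ∃ l r, l < p ∧ q < r ∧ Ioo l r ⊆ S := by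
  obtain ⟨l, l', ⟨hl, hl'⟩, hlS⟩ := mem_nhds_iff_exists_Ioo_subset.1
    (hS.mem_nhds (h ⟨le_rfl, hpq⟩))
  obtain ⟨r', r, ⟨hr', hr⟩, hrS⟩ := mem_nhds_iff_exists_Ioo_subset.1
    (hS.mem_nhds (h ⟨hpq, le_rfl⟩))
  refine ⟨l, r, hl, hr, fun x ⟨hlx, hxr⟩ => ?_⟩
  rcases lt_or_ge x p with hxp | hpx
  · exact hlS ⟨hlx, hxp.trans hl'⟩
  rcases le_or_gt x q with hxq | hqx
  · exact h ⟨hpx, hxq⟩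
  · exact hrS ⟨hr'.trans hqx, hxr⟩

noncomputable def J₀ (a : ℝ → ℝ) (v₁ v₂ : ℝ → ℝ → ℝ) (t x : ℝ) : ℝ :=
  1 / 2 * ∫ ξ in (0:ℝ)..x, (v₁ t ξ - v₂ t ξ) / a ξ

section J₀

variable {a : ℝ → ℝ} {v₁ v₂ : ℝ → ℝ → ℝ} {l r : ℝ}

theorem continuousOn_deriv_sub_div (ha : Continuous a) (hv₁ : ContDiff ℝ 1 (uncurry v₁))
    (hv₂ : ContDiff ℝ 1 (uncurry v₂)) (hpos : ∀ x ∈ Ioo l r, 0 < a x) :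
    ContinuousOn (fun p : ℝ × ℝ =>
      (deriv (fun s => v₁ s p.2) p.1 - deriv (fun s => v₂ s p.2) p.1) / a p.2)
      (univ ×ˢ Ioo l r) :=
  (hv₁.continuous_deriv_uncurry_left.sub hv₂.continuous_deriv_uncurry_left).continuousOn.div
    (ha.comp continuous_snd).continuousOn fun p hp => (hpos p.2 hp.2).ne'

theorem hasFDerivAt_J₀ (ha : ContDiff ℝ 1 a) (hv₁ : ContDiff ℝ 1 (uncurry v₁))
    (hv₂ : ContDiff ℝ 1 (uncurry v₂)) (hl : l < 0) (hr : 1 < r)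
    (hpos : ∀ x ∈ Ioo l r, 0 < a x) (t : ℝ) {x : ℝ} (hx : x ∈ Ioo l r) :
    HasFDerivAt (uncurry (J₀ a v₁ v₂)) ((1 / 2 : ℝ) •
      ((ContinuousLinearMap.fst ℝ ℝ ℝ).smulRight
          (∫ ξ in (0:ℝ)..x, (deriv (fun s => v₁ s ξ) t - deriv (fun s => v₂ s ξ) t) / a ξ)
        + (ContinuousLinearMap.snd ℝ ℝ ℝ).smulRight ((v₁ t x - v₂ t x) / a x))) (t, x) := by
  have hg : ContDiffOn ℝ 1 (fun p : ℝ × ℝ => (v₁ p.1 p.2 - v₂ p.1 p.2) / a p.2)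
      (univ ×ˢ Ioo l r) :=
    (hv₁.sub hv₂).contDiffOn.div (ha.comp contDiff_snd).contDiffOn
      fun p hp => (hpos p.2 hp.2).ne'
  have hgt : ∀ t, ∀ ξ ∈ Ioo l r, HasDerivAt (fun s => (v₁ s ξ - v₂ s ξ) / a ξ)
      ((deriv (fun s => v₁ s ξ) t - deriv (fun s => v₂ s ξ) t) / a ξ) t := fun t ξ _ =>
    (((hv₁.differentiable one_ne_zero) (t, ξ)).hasDerivAt_uncurry_left.fun_sub
      ((hv₂.differentiable one_ne_zero) (t, ξ)).hasDerivAt_uncurry_left).div_const (a ξ)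
  exact (hasFDerivAt_intervalIntegral_param_upper isOpen_Ioo ordConnected_Ioo
    ⟨hl, zero_lt_one.trans hr⟩ hg.continuousOn
    (continuousOn_deriv_sub_div ha.continuous hv₁ hv₂ hpos) hgt
    (p₀ := (t, x)) hx).const_mul _

theorem integral_deriv_sub_div_eq_add (ha : Continuous a) (hv₁ : ContDiff ℝ 1 (uncurry v₁))
    (hv₂ : ContDiff ℝ 1 (uncurry v₂)) (hl : l < 0) (hr : 1 < r)
    (hpos : ∀ x ∈ Ioo l r, 0 < a x) {t : ℝ}
    (hrel : ∀ ξ ∈ Icc (0:ℝ) 1, deriv (fun s => v₁ s ξ) t - deriv (fun s => v₂ s ξ) t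
      = a ξ * (deriv (fun y => v₁ t y) ξ + deriv (fun y => v₂ t y) ξ))
    (h0 : v₁ t 0 + v₂ t 0 = 0) {x : ℝ} (hx : x ∈ Icc (0:ℝ) 1) :
    ∫ ξ in (0:ℝ)..x, (deriv (fun s => v₁ s ξ) t - deriv (fun s => v₂ s ξ) t) / a ξ
      = v₁ t x + v₂ t x := by
  have hsub : uIcc 0 x ⊆ Icc (0:ℝ) 1 := by
    rw [uIcc_of_le hx.1]
    exact Icc_subset_Icc_right hx.2
  have hIcc : Icc (0:ℝ) 1 ⊆ Ioo l r := Icc_subset_Ioo hl hr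
  rw [intervalIntegral.integral_eq_sub_of_hasDerivAt (f := fun y => v₁ t y + v₂ t y)
    (fun ξ hξ => ?_) ((continuousOn_deriv_sub_div ha hv₁ hv₂ hpos).intervalIntegrable_slice t
      (hsub.trans hIcc)), h0, sub_zero]
  convert ((hv₁.differentiable one_ne_zero) (t, ξ)).hasDerivAt_uncurry_right.fun_add
    ((hv₂.differentiable one_ne_zero) (t, ξ)).hasDerivAt_uncurry_right using 1
  rw [div_eq_iff (hpos ξ (hIcc (hsub hξ))).ne', hrel ξ (hsub hξ), mul_comm]

theorem hasDerivAt_J₀_left (ha : ContDiff ℝ 1 a) (hv₁ : ContDiff ℝ 1 (uncurry v₁))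
    (hv₂ : ContDiff ℝ 1 (uncurry v₂)) (hl : l < 0) (hr : 1 < r)
    (hpos : ∀ x ∈ Ioo l r, 0 < a x) {t : ℝ}
    (hrel : ∀ ξ ∈ Icc (0:ℝ) 1, deriv (fun s => v₁ s ξ) t - deriv (fun s => v₂ s ξ) t
      = a ξ * (deriv (fun y => v₁ t y) ξ + deriv (fun y => v₂ t y) ξ))
    (h0 : v₁ t 0 + v₂ t 0 = 0) {x : ℝ} (hx : x ∈ Icc (0:ℝ) 1) :
    HasDerivAt (fun s => J₀ a v₁ v₂ s x) ((v₁ t x + v₂ t x) / 2) t := by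
  refine (hasFDerivAt_J₀ ha hv₁ hv₂ hl hr hpos t
    (Icc_subset_Ioo hl hr hx)).hasDerivAt_uncurry_left.congr_deriv ?_
  simp [integral_deriv_sub_div_eq_add ha.continuous hv₁ hv₂ hl hr hpos hrel h0 hx]
  ring

theorem hasDerivAt_J₀_right (ha : ContDiff ℝ 1 a) (hv₁ : ContDiff ℝ 1 (uncurry v₁))
    (hv₂ : ContDiff ℝ 1 (uncurry v₂)) (hl : l < 0) (hr : 1 < r)
    (hpos : ∀ x ∈ Ioo l r, 0 < a x) (t : ℝ) {x : ℝ} (hx : x ∈ Ioo l r) :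
    HasDerivAt (fun y => J₀ a v₁ v₂ t y) ((v₁ t x - v₂ t x) / (2 * a x)) x := by
  refine (hasFDerivAt_J₀ ha hv₁ hv₂ hl hr hpos t hx).hasDerivAt_uncurry_right.congr_deriv ?_
  simp
  ring

theorem contDiffOn_J₀ (ha : ContDiff ℝ 1 a) (hv₁ : ContDiff ℝ 1 (uncurry v₁))
    (hv₂ : ContDiff ℝ 1 (uncurry v₂)) (hl : l < 0) (hr : 1 < r)
    (hpos : ∀ x ∈ Ioo l r, 0 < a x)
    (hrel : ∀ t, ∀ ξ ∈ Icc (0:ℝ) 1, deriv (fun s => v₁ s ξ) t - deriv (fun s => v₂ s ξ) t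
      = a ξ * (deriv (fun y => v₁ t y) ξ + deriv (fun y => v₂ t y) ξ))
    (h0 : ∀ t, v₁ t 0 + v₂ t 0 = 0) :
    ContDiffOn ℝ 2 (uncurry (J₀ a v₁ v₂)) (univ ×ˢ Icc (0:ℝ) 1) := by
  have hIcc : Icc (0:ℝ) 1 ⊆ Ioo l r := Icc_subset_Ioo hl hr
  refine contDiffOn_succ_of_hasFDerivWithinAt (n := 1) (f' := fun p => (1 / 2 : ℝ) •
      ((ContinuousLinearMap.fst ℝ ℝ ℝ).smulRight (v₁ p.1 p.2 + v₂ p.1 p.2)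
        + (ContinuousLinearMap.snd ℝ ℝ ℝ).smulRight ((v₁ p.1 p.2 - v₂ p.1 p.2) / a p.2)))
    (fun p hp => ?_) ?_
  · rw [← integral_deriv_sub_div_eq_add ha.continuous hv₁ hv₂ hl hr hpos (hrel p.1) (h0 p.1) hp.2]
    exact (hasFDerivAt_J₀ ha hv₁ hv₂ hl hr hpos p.1 (hIcc hp.2)).hasFDerivWithinAt
  · have hg : ContDiffOn ℝ 1 (fun p : ℝ × ℝ => (v₁ p.1 p.2 - v₂ p.1 p.2) / a p.2)
        (univ ×ˢ Icc (0:ℝ) 1) :=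
      (hv₁.sub hv₂).contDiffOn.div (ha.comp contDiff_snd).contDiffOn
        fun p hp => (hpos p.2 (hIcc hp.2)).ne'
    exact ((contDiffOn_const.smulRight (hv₁.add hv₂).contDiffOn).add
      (contDiffOn_const.smulRight hg)).const_smul _

theorem deriv_deriv_J₀_left (ha : ContDiff ℝ 1 a) (hv₁ : ContDiff ℝ 1 (uncurry v₁))
    (hv₂ : ContDiff ℝ 1 (uncurry v₂)) (hl : l < 0) (hr : 1 < r)
    (hpos : ∀ x ∈ Ioo l r, 0 < a x)
    (hrel : ∀ t, ∀ ξ ∈ Icc (0:ℝ) 1, deriv (fun s => v₁ s ξ) t - deriv (fun s => v₂ s ξ) t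
      = a ξ * (deriv (fun y => v₁ t y) ξ + deriv (fun y => v₂ t y) ξ))
    (h0 : ∀ t, v₁ t 0 + v₂ t 0 = 0) (t : ℝ) {x : ℝ} (hx : x ∈ Icc (0:ℝ) 1) :
    deriv (fun s => deriv (fun s' => J₀ a v₁ v₂ s' x) s) t
      = (deriv (fun s => v₁ s x) t + deriv (fun s => v₂ s x) t) / 2 := by
  rw [funext fun s => (hasDerivAt_J₀_left ha hv₁ hv₂ hl hr hpos (hrel s) (h0 s) hx).deriv]
  exact (((hv₁.differentiable one_ne_zero) (t, x)).hasDerivAt_uncurry_left.fun_add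
    ((hv₂.differentiable one_ne_zero) (t, x)).hasDerivAt_uncurry_left).div_const 2 |>.deriv

theorem sq_mul_deriv_deriv_J₀_right (ha : ContDiff ℝ 1 a) (hv₁ : ContDiff ℝ 1 (uncurry v₁))
    (hv₂ : ContDiff ℝ 1 (uncurry v₂)) (hl : l < 0) (hr : 1 < r)
    (hpos : ∀ x ∈ Ioo l r, 0 < a x) (t : ℝ) {x : ℝ} (hx : x ∈ Ioo l r) :
    a x ^ 2 * deriv (fun y => deriv (fun y' => J₀ a v₁ v₂ t y') y) x
      = (a x * (deriv (fun y => v₁ t y) x - deriv (fun y => v₂ t y) x)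
        - deriv a x * (v₁ t x - v₂ t x)) / 2 := by
  have heq : (fun y => deriv (fun y' => J₀ a v₁ v₂ t y') y) =ᶠ[𝓝 x]
      fun y => (v₁ t y - v₂ t y) / (2 * a y) :=
    eventually_of_mem (isOpen_Ioo.mem_nhds hx) fun y hy =>
      (hasDerivAt_J₀_right ha hv₁ hv₂ hl hr hpos t hy).deriv
  rw [heq.deriv_eq, (((hv₁.differentiable one_ne_zero) (t, x)).hasDerivAt_uncurry_right.fun_sub
    ((hv₂.differentiable one_ne_zero) (t, x)).hasDerivAt_uncurry_right).fun_div
    (((ha.differentiable one_ne_zero) x).hasDerivAt.const_mul 2)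
    (mul_ne_zero two_ne_zero (hpos x hx).ne') |>.deriv]
  field_simp [(hpos x hx).ne']

end J₀

theorem stmt_18_general (a : ℝ → ℝ) (ha : ContDiff ℝ 1 a)
    (hapos : ∀ x ∈ Set.Icc (0:ℝ) 1, 0 < a x)
    (b : ℝ → ℝ → ℝ → ℝ → ℝ → ℝ)
    (v₁ v₂ : ℝ → ℝ → ℝ)
    (hv₁smooth : ContDiff ℝ 1 (Function.uncurry v₁))
    (hv₂smooth : ContDiff ℝ 1 (Function.uncurry v₂))
    (hsys : ∀ t : ℝ, ∀ x ∈ Set.Icc (0:ℝ) 1,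
      (deriv (fun s => v₁ s x) t - a x * deriv (fun y => v₁ t y) x
        = -(deriv a x / 2) * (v₁ t x - v₂ t x)
          - b t x ((1/2) * ∫ ξ in (0:ℝ)..x, (v₁ t ξ - v₂ t ξ) / a ξ)
              ((v₁ t x + v₂ t x) / 2) ((v₁ t x - v₂ t x) / (2 * a x))) ∧
      (deriv (fun s => v₂ s x) t + a x * deriv (fun y => v₂ t y) x
        = -(deriv a x / 2) * (v₁ t x - v₂ t x)
          - b t x ((1/2) * ∫ ξ in (0:ℝ)..x, (v₁ t ξ - v₂ t ξ) / a ξ)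
              ((v₁ t x + v₂ t x) / 2) ((v₁ t x - v₂ t x) / (2 * a x))))
    (hper : ∀ t x, v₁ (t + 2 * π) x = v₁ t x ∧ v₂ (t + 2 * π) x = v₂ t x)
    (hbc : ∀ t, v₁ t 0 + v₂ t 0 = 0 ∧ v₁ t 1 - v₂ t 1 = 0)
    (u : ℝ → ℝ → ℝ)
    (hu : ∀ t x, u t x = (1/2) * ∫ ξ in (0:ℝ)..x, (v₁ t ξ - v₂ t ξ) / a ξ) :
    ContDiffOn ℝ 2 (Function.uncurry u) (Set.univ ×ˢ Set.Icc (0:ℝ) 1) ∧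
    (∀ t x, u (t + 2 * π) x = u t x) ∧
    (∀ t : ℝ, ∀ x ∈ Set.Icc (0:ℝ) 1,
      deriv (fun s => deriv (fun s' => u s' x) s) t
        - (a x) ^ 2 * deriv (fun y => deriv (fun y' => u t y') y) x
        + b t x (u t x) (deriv (fun s => u s x) t) (deriv (fun y => u t y) x) = 0) ∧
    (∀ t, u t 0 = 0) ∧ (∀ t, deriv (fun y => u t y) 1 = 0) := by
  obtain rfl : u = J₀ a v₁ v₂ := funext fun t => funext fun x => hu t x
  obtain ⟨l, r, hl, hr, hlr⟩ := exists_Ioo_subset_of_Icc_subset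
    (isOpen_lt continuous_const ha.continuous) hapos zero_le_one
  have hpos : ∀ x ∈ Ioo l r, 0 < a x := hlr
  have hrel : ∀ t, ∀ x ∈ Icc (0:ℝ) 1, deriv (fun s => v₁ s x) t - deriv (fun s => v₂ s x) t
      = a x * (deriv (fun y => v₁ t y) x + deriv (fun y => v₂ t y) x) := fun t x hx => by
    linarith [(hsys t x hx).1, (hsys t x hx).2]
  have h0 : ∀ t, v₁ t 0 + v₂ t 0 = 0 := fun t => (hbc t).1
  refine ⟨contDiffOn_J₀ ha hv₁smooth hv₂smooth hl hr hpos hrel h0,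
    fun t x => by simp only [J₀, hper], fun t x hx => ?_, fun t => by simp [J₀], fun t => ?_⟩
  · have hxx := sq_mul_deriv_deriv_J₀_right ha hv₁smooth hv₂smooth hl hr hpos t
      (Icc_subset_Ioo hl hr hx)
    rw [deriv_deriv_J₀_left ha hv₁smooth hv₂smooth hl hr hpos hrel h0 t hx,
      (hasDerivAt_J₀_left ha hv₁smooth hv₂smooth hl hr hpos (hrel t) (h0 t) hx).deriv,
      (hasDerivAt_J₀_right ha hv₁smooth hv₂smooth hl hr hpos t (Icc_subset_Ioo hl hr hx)).deriv,
      hu t x]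
    linear_combination ((hsys t x hx).1 + (hsys t x hx).2) / 2 - hxx
  · rw [(hasDerivAt_J₀_right ha hv₁smooth hv₂smooth hl hr hpos t
      (Icc_subset_Ioo hl hr ⟨zero_le_one, le_rfl⟩)).deriv, (hbc t).2, zero_div]

/-- Lemma 4.3 (ii): a C¹ time-periodic solution `(v₁,v₂)` of the first-order system with
reflection boundary conditions gives, via `u = J₀v`, a C² time-periodic solution of the
second-order equation with mixed Dirichlet–Neumann boundary conditions. -/
theorem stmt_18 (a : ℝ → ℝ) (ha : ContDiff ℝ 1 a)
    (hapos : ∀ x ∈ Set.Icc (0:ℝ) 1, 0 < a x)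
    (b : ℝ → ℝ → ℝ → ℝ → ℝ → ℝ)
    (hb : ContDiff ℝ 1 (fun p : ℝ × ℝ × ℝ × ℝ × ℝ => b p.1 p.2.1 p.2.2.1 p.2.2.2.1 p.2.2.2.2))
    (hbper : ∀ t x p q r, b (t + 2 * π) x p q r = b t x p q r)
    (v₁ v₂ : ℝ → ℝ → ℝ)
    (hv₁smooth : ContDiff ℝ 1 (Function.uncurry v₁))
    (hv₂smooth : ContDiff ℝ 1 (Function.uncurry v₂))
    (hsys : ∀ t : ℝ, ∀ x ∈ Set.Icc (0:ℝ) 1,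
      (deriv (fun s => v₁ s x) t - a x * deriv (fun y => v₁ t y) x
        = -(deriv a x / 2) * (v₁ t x - v₂ t x)
          - b t x ((1/2) * ∫ ξ in (0:ℝ)..x, (v₁ t ξ - v₂ t ξ) / a ξ)
              ((v₁ t x + v₂ t x) / 2) ((v₁ t x - v₂ t x) / (2 * a x))) ∧
      (deriv (fun s => v₂ s x) t + a x * deriv (fun y => v₂ t y) x
        = -(deriv a x / 2) * (v₁ t x - v₂ t x)
          - b t x ((1/2) * ∫ ξ in (0:ℝ)..x, (v₁ t ξ - v₂ t ξ) / a ξ)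
              ((v₁ t x + v₂ t x) / 2) ((v₁ t x - v₂ t x) / (2 * a x))))
    (hper : ∀ t x, v₁ (t + 2 * π) x = v₁ t x ∧ v₂ (t + 2 * π) x = v₂ t x)
    (hbc : ∀ t, v₁ t 0 + v₂ t 0 = 0 ∧ v₁ t 1 - v₂ t 1 = 0)
    (u : ℝ → ℝ → ℝ)
    (hu : ∀ t x, u t x = (1/2) * ∫ ξ in (0:ℝ)..x, (v₁ t ξ - v₂ t ξ) / a ξ) :
    ContDiffOn ℝ 2 (Function.uncurry u) (Set.univ ×ˢ Set.Icc (0:ℝ) 1) ∧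
    (∀ t x, u (t + 2 * π) x = u t x) ∧
    (∀ t : ℝ, ∀ x ∈ Set.Icc (0:ℝ) 1,
      deriv (fun s => deriv (fun s' => u s' x) s) t
        - (a x) ^ 2 * deriv (fun y => deriv (fun y' => u t y') y) x
        + b t x (u t x) (deriv (fun s => u s x) t) (deriv (fun y => u t y) x) = 0) ∧
    (∀ t, u t 0 = 0) ∧ (∀ t, deriv (fun y => u t y) 1 = 0) :=
  stmt_18_general a ha hapos b v₁ v₂ hv₁smooth hv₂smooth hsys hper hbc u hu
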